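/- arXiv:1204.1505 — 8 statements merged into one kernel-verified Lean document; each statement's English description precedes it below -/
import Mathlib

section
/- Let U be a nonempty finite set, let τ and ν be probability mass functions on U with τ absolutely continuous with respect to ν (i.e. ν(u) = 0 implies τ(u) = 0), and let Δ > 0 be a real number. Define D(τ‖ν) = ∑_{u ∈ U, τ(u) > 0} τ(u) · log₂(τ(u)/ν(u)). Then ∑_{u ∈ U : τ(u) > 2^Δ · ν(u)} τ(u) ≤ (D(τ‖ν) + 1)/Δ. -/
/-!
Split `D(τ‖ν)` over the bad set `B` and its complement. On `B` every term `τ log₂(τ/ν)` is at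
least `Δ τ`. Off `B`, the bound `x log x ≥ -1/e` gives `τ log₂(τ/ν) ≥ -ν / (e ln 2) ≥ -ν`, and
since `ν` is a probability these terms sum to at least `-1`.
-/

open Finset Real

lemma neg_div_exp_one_le_mul_log_div {t s : ℝ} (ht : 0 < t) (hs : 0 < s) :
    -(s / exp 1) ≤ t * log (t / s) := by
  have hst : 0 < s / t := div_pos hs ht
  have hlog : log (s / t) ≤ s / t / exp 1 := by
    have h := log_le_sub_one_of_pos (div_pos hst (exp_pos 1))
    rw [log_div hst.ne' (exp_pos 1).ne', log_exp] at h
    linarith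
  calc -(s / exp 1) = -(t * (s / t / exp 1)) := by field_simp
    _ ≤ -(t * log (s / t)) := by gcongr
    _ = t * log (t / s) := by rw [← mul_neg, ← log_inv, inv_div]

lemma one_lt_exp_one_mul_log_two : 1 < exp 1 * log 2 := by
  nlinarith [exp_one_gt_d9, log_two_gt_d9]

lemma neg_le_mul_logb_two_div {t s : ℝ} (ht : 0 < t) (hs : 0 < s) :
    -s ≤ t * logb 2 (t / s) := by
  have hlog2 : 0 < log 2 := log_pos one_lt_two
  have hes : s / (exp 1 * log 2) ≤ s :=
    div_le_self hs.le one_lt_exp_one_mul_log_two.le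
  calc -s ≤ -(s / exp 1) / log 2 := by rw [neg_div, div_div]; linarith
    _ ≤ t * log (t / s) / log 2 := by gcongr; exact neg_div_exp_one_le_mul_log_div ht hs
    _ = t * logb 2 (t / s) := by rw [logb, mul_div_assoc]

lemma mul_le_mul_logb_two_div_of_rpow_mul_lt {t s Δ : ℝ} (hs : 0 < s)
    (hbad : 2 ^ Δ * s < t) : Δ * t ≤ t * logb 2 (t / s) := by
  have hratio : 2 ^ Δ < t / s := (lt_div_iff₀ hs).2 hbad
  have hΔ : Δ ≤ logb 2 (t / s) :=
    (le_logb_iff_rpow_le one_lt_two ((rpow_pos_of_pos two_pos Δ).trans hratio)).2 hratio.le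
  have ht : 0 < t := (mul_pos (rpow_pos_of_pos two_pos Δ) hs).trans hbad
  rw [mul_comm Δ]
  exact mul_le_mul_of_nonneg_left hΔ ht.le

theorem statement_0_general {U : Type*} [Fintype U]
    (τ ν : U → ℝ)
    (hν0 : ∀ u, 0 ≤ ν u)
    (hν1 : ∑ u, ν u = 1)
    (hac : ∀ u, ν u = 0 → τ u = 0)
    (Δ : ℝ) (hΔ : 0 < Δ) :
    ∑ u ∈ univ.filter (fun u => (2 : ℝ) ^ Δ * ν u < τ u), τ u ≤
      ((∑ u ∈ univ.filter (fun u => 0 < τ u), τ u * Real.logb 2 (τ u / ν u)) + 1) / Δ := by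
  classical
  set B := univ.filter (fun u => (2 : ℝ) ^ Δ * ν u < τ u)
  set P := univ.filter (fun u => 0 < τ u)
  have hν_pos : ∀ u, 0 < τ u → 0 < ν u := fun u hτ =>
    (hν0 u).lt_of_ne fun h => hτ.ne' (hac u h.symm)
  have hBP : B ⊆ P := fun u hu => by
    simp only [B, P, mem_filter, mem_univ, true_and] at hu ⊢
    exact (mul_nonneg (rpow_pos_of_pos two_pos Δ).le (hν0 u)).trans_lt hu
  have hbad : Δ * ∑ u ∈ B, τ u ≤ ∑ u ∈ B, τ u * logb 2 (τ u / ν u) := by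
    rw [mul_sum]
    refine sum_le_sum fun u hu => mul_le_mul_logb_two_div_of_rpow_mul_lt ?_ (mem_filter.1 hu).2
    exact hν_pos u (mem_filter.1 (hBP hu)).2
  have hgood : -1 ≤ ∑ u ∈ P \ B, τ u * logb 2 (τ u / ν u) := by
    have hτ_pos : ∀ u ∈ P \ B, 0 < τ u := fun u hu => (mem_filter.1 (mem_sdiff.1 hu).1).2
    calc -1 ≤ -∑ u ∈ P \ B, ν u := by
          rw [neg_le_neg_iff, ← hν1]
          exact sum_le_sum_of_subset_of_nonneg (subset_univ _) fun u _ _ => hν0 u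
      _ ≤ ∑ u ∈ P \ B, τ u * logb 2 (τ u / ν u) := by
          rw [← sum_neg_distrib]
          exact sum_le_sum fun u hu =>
            neg_le_mul_logb_two_div (hτ_pos u hu) (hν_pos u (hτ_pos u hu))
  rw [le_div_iff₀ hΔ, ← sum_sdiff hBP]
  linarith

/-- For pmfs `τ, ν` on a nonempty finite set `U` with `τ` absolutely
continuous w.r.t. `ν`, and `Δ > 0`, the `τ`-mass of the `Δ`-bad set
`{u : 2^Δ ν(u) < τ(u)}` is at most `(D(τ‖ν) + 1)/Δ`, where
`D(τ‖ν) = ∑_{u : τ(u) > 0} τ(u) log₂(τ(u)/ν(u))`. -/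
theorem statement_0 {U : Type*} [Fintype U] [Nonempty U]
    (τ ν : U → ℝ)
    (hτ0 : ∀ u, 0 ≤ τ u) (hν0 : ∀ u, 0 ≤ ν u)
    (hτ1 : ∑ u, τ u = 1) (hν1 : ∑ u, ν u = 1)
    (hac : ∀ u, ν u = 0 → τ u = 0)
    (Δ : ℝ) (hΔ : 0 < Δ) :
    ∑ u ∈ univ.filter (fun u => (2 : ℝ) ^ Δ * ν u < τ u), τ u ≤
      ((∑ u ∈ univ.filter (fun u => 0 < τ u), τ u * Real.logb 2 (τ u / ν u)) + 1) / Δ :=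
  statement_0_general τ ν hν0 hν1 hac Δ hΔ
end

section
/- Let U be a nonempty finite set, Δ ≥ 0 a real number, and p_A, q_A, p_B, q_B : U → [0,1] functions such that each of τ(u) := p_A(u)p_B(u), ν_A(u) := p_A(u)q_A(u), ν_B(u) := p_B(u)q_B(u) sums to 1 over U. Define the accept weight a(u) := (1/(|U|·2^{2Δ})) · min(p_A(u), 2^Δ q_B(u)) · min(p_B(u), 2^Δ q_A(u)), the bad set B := {u ∈ U : 2^Δ ν_A(u) < τ(u) or 2^Δ ν_B(u) < τ(u)}, and γ := ∑_{u ∈ B} τ(u). Then ∑_{u ∈ U} a(u) ≥ (1 − γ)/(|U|·2^{2Δ}). Moreover, for every u ∉ B one has a(u) = τ(u)/(|U|·2^{2Δ}). -/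
open Finset

/-- In the single sampling experiment, the total acceptance probability is
at least `(1-γ)/(|U| 2^{2Δ})` where `γ` is the `τ`-mass of the bad set
`B = {u : 2^Δ ν_A(u) < τ(u) or 2^Δ ν_B(u) < τ(u)}`; moreover for `u ∉ B` the acceptance
weight is exactly `τ(u)/(|U| 2^{2Δ})`. -/
theorem statement_2 {U : Type*} [Fintype U] [Nonempty U]
    (Δ : ℝ) (hΔ : 0 ≤ Δ)
    (pA qA pB qB : U → ℝ)
    (hpA : ∀ u, pA u ∈ Set.Icc (0 : ℝ) 1) (hqA : ∀ u, qA u ∈ Set.Icc (0 : ℝ) 1)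
    (hpB : ∀ u, pB u ∈ Set.Icc (0 : ℝ) 1) (hqB : ∀ u, qB u ∈ Set.Icc (0 : ℝ) 1)
    (hτ : ∑ u, pA u * pB u = 1)
    (hνA : ∑ u, pA u * qA u = 1)
    (hνB : ∑ u, pB u * qB u = 1)
    (a : U → ℝ)
    (ha : ∀ u, a u = (1 / ((Fintype.card U : ℝ) * (2 : ℝ) ^ (2 * Δ))) *
        min (pA u) ((2 : ℝ) ^ Δ * qB u) * min (pB u) ((2 : ℝ) ^ Δ * qA u))
    (γ : ℝ)
    (hγ : γ = ∑ u ∈ univ.filter (fun u =>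
        (2 : ℝ) ^ Δ * (pA u * qA u) < pA u * pB u ∨
        (2 : ℝ) ^ Δ * (pB u * qB u) < pA u * pB u), pA u * pB u) :
    (1 - γ) / ((Fintype.card U : ℝ) * (2 : ℝ) ^ (2 * Δ)) ≤ ∑ u, a u ∧
    ∀ u, ¬((2 : ℝ) ^ Δ * (pA u * qA u) < pA u * pB u ∨
           (2 : ℝ) ^ Δ * (pB u * qB u) < pA u * pB u) →
      a u = (pA u * pB u) / ((Fintype.card U : ℝ) * (2 : ℝ) ^ (2 * Δ)) := by
  have hcard : (0:ℝ) < (Fintype.card U : ℝ) := by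
    exact_mod_cast Fintype.card_pos
  have hc : (0:ℝ) < (Fintype.card U : ℝ) * (2 : ℝ) ^ (2 * Δ) := by positivity
  have hexp : (0:ℝ) < (2 : ℝ) ^ Δ := by positivity
  -- key: exact value off the bad set
  have key : ∀ u, ¬((2 : ℝ) ^ Δ * (pA u * qA u) < pA u * pB u ∨
           (2 : ℝ) ^ Δ * (pB u * qB u) < pA u * pB u) →
      a u = (pA u * pB u) / ((Fintype.card U : ℝ) * (2 : ℝ) ^ (2 * Δ)) := by
    intro u hu
    push_neg at hu
    obtain ⟨h1, h2⟩ := hu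
    rw [ha]
    rcases eq_or_lt_of_le (hpA u).1 with hA0 | hA0
    · have hm : min (pA u) ((2 : ℝ) ^ Δ * qB u) = 0 := by
        rw [← hA0] at *
        have : (0:ℝ) ≤ (2 : ℝ) ^ Δ * qB u := by
          have := (hqB u).1; positivity
        simp [min_eq_left this]
      rw [hm, ← hA0]
      ring
    rcases eq_or_lt_of_le (hpB u).1 with hB0 | hB0
    · have hm : min (pB u) ((2 : ℝ) ^ Δ * qA u) = 0 := by
        rw [← hB0] at *
        have : (0:ℝ) ≤ (2 : ℝ) ^ Δ * qA u := by
          have := (hqA u).1; positivity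
        simp [min_eq_left this]
      rw [hm, ← hB0]
      ring
    · have hm1 : min (pA u) ((2 : ℝ) ^ Δ * qB u) = pA u := by
        apply min_eq_left
        have : pA u * pB u ≤ ((2 : ℝ) ^ Δ * qB u) * pB u := by nlinarith
        exact le_of_mul_le_mul_right (by linarith) hB0
      have hm2 : min (pB u) ((2 : ℝ) ^ Δ * qA u) = pB u := by
        apply min_eq_left
        have : pB u * pA u ≤ ((2 : ℝ) ^ Δ * qA u) * pA u := by nlinarith
        exact le_of_mul_le_mul_right (by linarith) hA0
      rw [hm1, hm2]
      ring
  refine ⟨?_, key⟩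
  -- a is nonnegative
  have hanonneg : ∀ u, 0 ≤ a u := by
    intro u
    rw [ha]
    have h1 : 0 ≤ min (pA u) ((2 : ℝ) ^ Δ * qB u) :=
      le_min (hpA u).1 (by have := (hqB u).1; positivity)
    have h2 : 0 ≤ min (pB u) ((2 : ℝ) ^ Δ * qA u) :=
      le_min (hpB u).1 (by have := (hqA u).1; positivity)
    have : (0:ℝ) ≤ 1 / ((Fintype.card U : ℝ) * (2 : ℝ) ^ (2 * Δ)) := by positivity
    positivity
  classical
  set P : U → Prop := fun u =>
        (2 : ℝ) ^ Δ * (pA u * qA u) < pA u * pB u ∨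
        (2 : ℝ) ^ Δ * (pB u * qB u) < pA u * pB u with hP
  calc (1 - γ) / ((Fintype.card U : ℝ) * (2 : ℝ) ^ (2 * Δ))
      = ∑ u ∈ univ.filter (fun u => ¬ P u), a u := by
        rw [eq_comm, Finset.sum_congr rfl (fun u hu => key u (Finset.mem_filter.mp hu).2),
          ← Finset.sum_div]
        congr 1
        have := Finset.sum_filter_add_sum_filter_not Finset.univ P (fun u => pA u * pB u)
        rw [hτ] at this
        rw [hγ]
        linarith
    _ ≤ ∑ u, a u := by
        apply Finset.sum_le_sum_of_subset_of_nonneg (Finset.filter_subset _ _)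
        intro u _ _
        exact hanonneg u
end

section
/- Let U be a nonempty finite set, Δ ≥ 0 a real number, and p_A, q_A, p_B, q_B : U → [0,1] functions such that each of τ(u) := p_A(u)p_B(u), ν_A(u) := p_A(u)q_A(u), ν_B(u) := p_B(u)q_B(u) sums to 1 over U. Define a(u) := (1/(|U|·2^{2Δ})) · min(p_A(u), 2^Δ q_B(u)) · min(p_B(u), 2^Δ q_A(u)), the bad set B := {u ∈ U : 2^Δ ν_A(u) < τ(u) or 2^Δ ν_B(u) < τ(u)}, and γ := ∑_{u ∈ B} τ(u). Assume γ < 1, so that η := ∑_{u ∈ U} a(u) > 0, and define the conditional distribution τ'(u) := a(u)/η. Then for every subset T ⊆ U, ∑_{u ∈ T} τ(u) − ∑_{u ∈ T} τ'(u) ≤ γ; consequently the statistical (total variation) distance between τ and τ' is at most γ. -/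
open Finset

/-!
Outside the bad set `B` both minima in `a(u)` are attained by `p_A(u)` and `p_B(u)`, so
`a = c·τ` there, with `c = 1/(|U|·2^{2Δ})`, while `a ≤ c·τ` everywhere. Hence
`c(1 - γ) ≤ η ≤ c`, and for every `T` the rescaled mass `a(T)/η ≥ a(T)/c` already covers
`τ(T \ B)`; what `τ'` can miss of `τ(T)` is at most `τ(T ∩ B) ≤ γ`. The two-sided bound
follows by applying this to `Tᶜ`, since `τ` and `τ'` both have total mass `1`.
-/

lemma min_mul_min_le_mul {p q p' q' : ℝ} (hp : 0 ≤ p) (hp' : 0 ≤ p') (hq' : 0 ≤ q') :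
    min p q * min p' q' ≤ p * p' :=
  mul_le_mul (min_le_left _ _) (min_le_left _ _) (le_min hp' hq') hp

lemma min_mul_min_eq_mul_of_le {p q p' q' : ℝ} (hp : 0 ≤ p) (hq : 0 ≤ q) (hp' : 0 ≤ p')
    (hq' : 0 ≤ q') (h : p * p' ≤ p' * q) (h' : p * p' ≤ p * q') :
    min p q * min p' q' = p * p' := by
  rcases hp.eq_or_lt with rfl | hp
  · simp [hq]
  rcases hp'.eq_or_lt with rfl | hp'
  · simp [hq']
  rw [min_eq_left (le_of_mul_le_mul_left (by linarith) hp'),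
    min_eq_left (le_of_mul_le_mul_left (by linarith) hp)]

section Reweighting

variable {ι : Type*} [DecidableEq ι] {τ a : ι → ℝ} {c : ℝ} {B : Finset ι}

lemma mul_sum_compl_le_sum_of_eq_off [Fintype ι] (ha : ∀ u, 0 ≤ a u)
    (heq : ∀ u ∉ B, a u = c * τ u) :
    c * ∑ u ∈ Bᶜ, τ u ≤ ∑ u, a u := by
  rw [mul_sum, sum_congr rfl fun u hu => (heq u (mem_compl.mp hu)).symm]
  exact sum_le_sum_of_subset_of_nonneg (subset_univ _) fun u _ _ => ha u

lemma sum_sub_sum_div_le_sum_of_eq_off (hτ : ∀ u, 0 ≤ τ u) (ha : ∀ u, 0 ≤ a u)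
    (heq : ∀ u ∉ B, a u = c * τ u) {η : ℝ} (hη : 0 < η) (hηc : η ≤ c) (T : Finset ι) :
    ∑ u ∈ T, τ u - ∑ u ∈ T, a u / η ≤ ∑ u ∈ B, τ u := by
  have hoff : ∑ u ∈ T \ B, τ u ≤ ∑ u ∈ T, a u / η :=
    calc ∑ u ∈ T \ B, τ u = ∑ u ∈ T \ B, a u / c :=
          sum_congr rfl fun u hu => by
            rw [heq u (mem_sdiff.mp hu).2, mul_div_cancel_left₀ _ (hη.trans_le hηc).ne']
      _ ≤ ∑ u ∈ T \ B, a u / η :=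
          sum_le_sum fun u _ => div_le_div_of_nonneg_left (ha u) hη hηc
      _ ≤ ∑ u ∈ T, a u / η :=
          sum_le_sum_of_subset_of_nonneg sdiff_subset fun u _ _ => div_nonneg (ha u) hη.le
  have hon : ∑ u ∈ T ∩ B, τ u ≤ ∑ u ∈ B, τ u :=
    sum_le_sum_of_subset_of_nonneg inter_subset_right fun u _ _ => hτ u
  linarith [sum_inter_add_sum_sdiff T B τ]

end Reweighting

lemma abs_sum_sub_sum_le_of_sum_eq {ι : Type*} [Fintype ι] {μ ν : ι → ℝ} {γ : ℝ}
    (hsum : ∑ u, μ u = ∑ u, ν u) (h : ∀ T : Finset ι, ∑ u ∈ T, μ u - ∑ u ∈ T, ν u ≤ γ)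
    (T : Finset ι) : |∑ u ∈ T, μ u - ∑ u ∈ T, ν u| ≤ γ := by
  classical
  rw [abs_le]
  refine ⟨?_, h T⟩
  linarith [h Tᶜ, sum_add_sum_compl T μ, sum_add_sum_compl T ν]

theorem statement_3_general {U : Type*} [Fintype U] [Nonempty U]
    (Δ : ℝ)
    (pA qA pB qB : U → ℝ)
    (hpA : ∀ u, pA u ∈ Set.Icc (0 : ℝ) 1) (hqA : ∀ u, qA u ∈ Set.Icc (0 : ℝ) 1)
    (hpB : ∀ u, pB u ∈ Set.Icc (0 : ℝ) 1) (hqB : ∀ u, qB u ∈ Set.Icc (0 : ℝ) 1)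
    (hτ : ∑ u, pA u * pB u = 1)
    (a : U → ℝ)
    (ha : ∀ u, a u = (1 / ((Fintype.card U : ℝ) * (2 : ℝ) ^ (2 * Δ))) *
        min (pA u) ((2 : ℝ) ^ Δ * qB u) * min (pB u) ((2 : ℝ) ^ Δ * qA u))
    (γ : ℝ)
    (hγ : γ = ∑ u ∈ univ.filter (fun u =>
        (2 : ℝ) ^ Δ * (pA u * qA u) < pA u * pB u ∨
        (2 : ℝ) ^ Δ * (pB u * qB u) < pA u * pB u), pA u * pB u)
    (hγ1 : γ < 1)
    (η : ℝ) (hη : η = ∑ u, a u) :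
    0 < η ∧
    (∀ T : Finset U, ∑ u ∈ T, pA u * pB u - ∑ u ∈ T, a u / η ≤ γ) ∧
    (∀ T : Finset U, |∑ u ∈ T, pA u * pB u - ∑ u ∈ T, a u / η| ≤ γ) := by
  classical
  set c : ℝ := 1 / ((Fintype.card U : ℝ) * (2 : ℝ) ^ (2 * Δ))
  set B := univ.filter fun u =>
    (2 : ℝ) ^ Δ * (pA u * qA u) < pA u * pB u ∨ (2 : ℝ) ^ Δ * (pB u * qB u) < pA u * pB u
  have hc : 0 < c := by positivity
  have hτ0 u : 0 ≤ pA u * pB u := mul_nonneg (hpA u).1 (hpB u).1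
  have hqA' u : 0 ≤ (2 : ℝ) ^ Δ * qA u := mul_nonneg (by positivity) (hqA u).1
  have hqB' u : 0 ≤ (2 : ℝ) ^ Δ * qB u := mul_nonneg (by positivity) (hqB u).1
  have ha0 u : 0 ≤ a u := by
    rw [ha u]
    exact mul_nonneg (mul_nonneg hc.le (le_min (hpA u).1 (hqB' u))) (le_min (hpB u).1 (hqA' u))
  have hale u : a u ≤ c * (pA u * pB u) := by
    rw [ha u, mul_assoc]
    exact mul_le_mul_of_nonneg_left (min_mul_min_le_mul (hpA u).1 (hpB u).1 (hqA' u)) hc.le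
  have haeq u (hu : u ∉ B) : a u = c * (pA u * pB u) := by
    simp only [B, mem_filter, mem_univ, true_and, not_or, not_lt] at hu
    rw [ha u, mul_assoc, min_mul_min_eq_mul_of_le (hpA u).1 (hqB' u) (hpB u).1 (hqA' u)
      (by linarith [hu.2]) (by linarith [hu.1])]
  have hηc : η ≤ c := by
    rw [hη, ← mul_one c, ← hτ, mul_sum]
    exact sum_le_sum fun u _ => hale u
  have hηγ : c * (1 - γ) ≤ η := by
    rw [hη, hγ, ← hτ, ← sum_compl_add_sum B, add_sub_cancel_right]
    exact mul_sum_compl_le_sum_of_eq_off ha0 haeq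
  have hηpos : 0 < η := (mul_pos hc (sub_pos.mpr hγ1)).trans_le hηγ
  have key T : ∑ u ∈ T, pA u * pB u - ∑ u ∈ T, a u / η ≤ γ :=
    hγ ▸ sum_sub_sum_div_le_sum_of_eq_off hτ0 ha0 haeq hηpos hηc T
  refine ⟨hηpos, key, abs_sum_sub_sum_le_of_sum_eq ?_ key⟩
  rw [hτ, ← sum_div, ← hη, div_self hηpos.ne']

/-- In the single sampling experiment, if the bad-set mass `γ < 1`, then the
total acceptance probability `η = ∑_u a(u)` is positive, and the conditional output
distribution `τ'(u) = a(u)/η` satisfies `τ(T) - τ'(T) ≤ γ` for every `T ⊆ U`; consequently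
the statistical distance between `τ` and `τ'` is at most `γ`. -/
theorem statement_3 {U : Type*} [Fintype U] [Nonempty U]
    (Δ : ℝ) (hΔ : 0 ≤ Δ)
    (pA qA pB qB : U → ℝ)
    (hpA : ∀ u, pA u ∈ Set.Icc (0 : ℝ) 1) (hqA : ∀ u, qA u ∈ Set.Icc (0 : ℝ) 1)
    (hpB : ∀ u, pB u ∈ Set.Icc (0 : ℝ) 1) (hqB : ∀ u, qB u ∈ Set.Icc (0 : ℝ) 1)
    (hτ : ∑ u, pA u * pB u = 1)
    (hνA : ∑ u, pA u * qA u = 1)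
    (hνB : ∑ u, pB u * qB u = 1)
    (a : U → ℝ)
    (ha : ∀ u, a u = (1 / ((Fintype.card U : ℝ) * (2 : ℝ) ^ (2 * Δ))) *
        min (pA u) ((2 : ℝ) ^ Δ * qB u) * min (pB u) ((2 : ℝ) ^ Δ * qA u))
    (γ : ℝ)
    (hγ : γ = ∑ u ∈ univ.filter (fun u =>
        (2 : ℝ) ^ Δ * (pA u * qA u) < pA u * pB u ∨
        (2 : ℝ) ^ Δ * (pB u * qB u) < pA u * pB u), pA u * pB u)
    (hγ1 : γ < 1)
    (η : ℝ) (hη : η = ∑ u, a u) :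
    0 < η ∧
    (∀ T : Finset U, ∑ u ∈ T, pA u * pB u - ∑ u ∈ T, a u / η ≤ γ) ∧
    (∀ T : Finset U, |∑ u ∈ T, pA u * pB u - ∑ u ∈ T, a u / η| ≤ γ) :=
  statement_3_general Δ pA qA pB qB hpA hqA hpB hqB hτ a ha γ hγ hγ1 η hη
end

section
/- Fix finite sets X, Y, a finite output set Z, a set S ⊆ X × Y of valid inputs, a function f : S → Z, ε ∈ [0,1], and z₀ ∈ Z. Let w be a family of nonnegative reals w_{R,z} that is ε-feasible for the relaxed partition bound of f, and define w'_R := w_{R,z₀} for each rectangle R. Then w' satisfies the smooth rectangle constraints for z₀: (i) for every (x,y) ∈ S with f(x,y) = z₀, 1 − ε ≤ ∑_{R ∋ (x,y)} w'_R ≤ 1; (ii) for every (x,y) ∈ S with f(x,y) ≠ z₀, ∑_{R ∋ (x,y)} w'_R ≤ ε; and ∑_R w'_R ≤ ∑_{R,z} w_{R,z}. Consequently srec^{z₀}_ε(f) ≤ bprt_ε(f), where srec^{z₀}_ε(f) is the minimum of ∑_R w'_R over families w' of nonnegative reals indexed by rectangles satisfying (i) and (ii). -/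
open Finset

/-- Membership of an input pair in a rectangle (encoded as a pair of finsets). -/
def MemRect {X Y : Type*} (p : X × Y) (R : Finset X × Finset Y) : Prop :=
  p.1 ∈ R.1 ∧ p.2 ∈ R.2

instance {X Y : Type*} [DecidableEq X] [DecidableEq Y] (p : X × Y) (R : Finset X × Finset Y) :
    Decidable (MemRect p R) := by unfold MemRect; infer_instance

/-- `∑_{R ∋ p} w_{R,z}`. -/
noncomputable def coverSum {X Y Z : Type*} [Fintype X] [Fintype Y]
    [DecidableEq X] [DecidableEq Y]
    (w : Finset X × Finset Y → Z → ℝ) (p : X × Y) (z : Z) : ℝ :=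
  ∑ R ∈ univ.filter (fun R => MemRect p R), w R z

/-- `∑_{R ∋ p} w'_R` for a rectangle-indexed family. -/
noncomputable def rectCoverSum {X Y : Type*} [Fintype X] [Fintype Y]
    [DecidableEq X] [DecidableEq Y]
    (w' : Finset X × Finset Y → ℝ) (p : X × Y) : ℝ :=
  ∑ R ∈ univ.filter (fun R => MemRect p R), w' R

/-- A family `w` is `ε`-feasible for the relaxed partition bound of `f` (valid inputs `S`). -/
def RelaxedFeasible {X Y Z : Type*} [Fintype X] [Fintype Y] [Fintype Z]
    [DecidableEq X] [DecidableEq Y]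
    (S : Finset (X × Y)) (f : X × Y → Z) (ε : ℝ)
    (w : Finset X × Finset Y → Z → ℝ) : Prop :=
  (∀ R z, 0 ≤ w R z) ∧
  (∀ p ∈ S, 1 - ε ≤ coverSum w p (f p)) ∧
  (∀ p ∉ S, 1 - ε ≤ ∑ z, coverSum w p z) ∧
  (∀ p : X × Y, ∑ z, coverSum w p z ≤ 1)

/-- The smooth-rectangle constraints of Jain and Klauck for output `z₀`. -/
def SmoothRectFeasible {X Y Z : Type*} [Fintype X] [Fintype Y]
    [DecidableEq X] [DecidableEq Y]
    (S : Finset (X × Y)) (f : X × Y → Z) (ε : ℝ) (z₀ : Z)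
    (w' : Finset X × Finset Y → ℝ) : Prop :=
  (∀ R, 0 ≤ w' R) ∧
  (∀ p ∈ S, f p = z₀ → 1 - ε ≤ rectCoverSum w' p ∧ rectCoverSum w' p ≤ 1) ∧
  (∀ p ∈ S, f p ≠ z₀ → rectCoverSum w' p ≤ ε)

/-- The objective value `∑_{R,z} w_{R,z}`. -/
noncomputable def totalWeight {X Y Z : Type*} [Fintype X] [Fintype Y] [Fintype Z]
    [DecidableEq X] [DecidableEq Y]
    (w : Finset X × Finset Y → Z → ℝ) : ℝ :=
  ∑ R : Finset X × Finset Y, ∑ z : Z, w R z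

/-- The relaxed partition bound `bprt_ε(f)`. -/
noncomputable def bprt {X Y Z : Type*} [Fintype X] [Fintype Y] [Fintype Z]
    [DecidableEq X] [DecidableEq Y]
    (S : Finset (X × Y)) (f : X × Y → Z) (ε : ℝ) : ℝ :=
  sInf {v : ℝ | ∃ w : Finset X × Finset Y → Z → ℝ,
    RelaxedFeasible S f ε w ∧ v = totalWeight w}

/-- The smooth rectangle bound `srec^{z₀}_ε(f)`. -/
noncomputable def srec {X Y Z : Type*} [Fintype X] [Fintype Y]
    [DecidableEq X] [DecidableEq Y]
    (S : Finset (X × Y)) (f : X × Y → Z) (ε : ℝ) (z₀ : Z) : ℝ :=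
  sInf {v : ℝ | ∃ w' : Finset X × Finset Y → ℝ,
    SmoothRectFeasible S f ε z₀ w' ∧ v = ∑ R : Finset X × Finset Y, w' R}

lemma aux_feasible {X Y Z : Type*} [Fintype X] [Fintype Y] [Fintype Z]
    [DecidableEq X] [DecidableEq Y]
    (S : Finset (X × Y)) (f : X × Y → Z) (ε : ℝ) (z₀ : Z)
    (w : Finset X × Finset Y → Z → ℝ)
    (hw : RelaxedFeasible S f ε w) :
    SmoothRectFeasible S f ε z₀ (fun R => w R z₀) ∧
    (∑ R : Finset X × Finset Y, w R z₀) ≤ totalWeight w := by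
  obtain ⟨h0, h1, _h2, h3⟩ := hw
  have hrect : ∀ p : X × Y, rectCoverSum (fun R => w R z₀) p = coverSum w p z₀ := by
    intro p; rfl
  have hle : ∀ (p : X × Y) (z : Z), coverSum w p z ≤ ∑ z', coverSum w p z' := by
    intro p z
    exact Finset.single_le_sum (f := fun z' => coverSum w p z')
      (fun z' _ => Finset.sum_nonneg fun R _ => h0 R z') (Finset.mem_univ z)
  refine ⟨⟨fun R => h0 R z₀, ?_, ?_⟩, ?_⟩
  · intro p hp hfp
    rw [hrect]
    constructor
    · rw [← hfp]; exact h1 p hp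
    · exact le_trans (hle p z₀) (h3 p)
  · intro p hp hfp
    rw [hrect]
    have hsplit : coverSum w p (f p) + coverSum w p z₀ ≤ ∑ z, coverSum w p z := by
      classical
      have := Finset.add_sum_erase Finset.univ (fun z => coverSum w p z)
        (Finset.mem_univ (f p))
      rw [← this]
      gcongr
      exact Finset.single_le_sum (f := fun z' => coverSum w p z')
        (fun z' _ => Finset.sum_nonneg fun R _ => h0 R z')
        (Finset.mem_erase.mpr ⟨fun h => hfp h.symm, Finset.mem_univ z₀⟩)
    have := le_trans hsplit (h3 p)
    have h1p := h1 p hp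
    linarith
  · unfold totalWeight
    gcongr with R _
    exact Finset.single_le_sum (f := fun z => w R z) (fun z _ => h0 R z) (Finset.mem_univ z₀)

/-- From a relaxed-partition-feasible family `w`, the family
`w'_R = w_{R,z₀}` satisfies the smooth rectangle constraints for `z₀` with no larger
objective value; consequently `srec^{z₀}_ε(f) ≤ bprt_ε(f)`. -/
theorem statement_6 {X Y Z : Type*} [Fintype X] [Fintype Y] [Fintype Z]
    [DecidableEq X] [DecidableEq Y]
    (S : Finset (X × Y)) (f : X × Y → Z) (ε : ℝ) (hε : ε ∈ Set.Icc (0 : ℝ) 1) (z₀ : Z)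
    (w : Finset X × Finset Y → Z → ℝ)
    (hw : RelaxedFeasible S f ε w) :
    SmoothRectFeasible S f ε z₀ (fun R => w R z₀) ∧
    (∑ R : Finset X × Finset Y, w R z₀) ≤ totalWeight w ∧
    srec S f ε z₀ ≤ bprt S f ε := by
  obtain ⟨hfeas, hobj⟩ := aux_feasible S f ε z₀ w hw
  refine ⟨hfeas, hobj, ?_⟩
  have hBne : ({v : ℝ | ∃ w : Finset X × Finset Y → Z → ℝ,
      RelaxedFeasible S f ε w ∧ v = totalWeight w}).Nonempty :=
    ⟨totalWeight w, w, hw, rfl⟩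
  have hAbdd : BddBelow {v : ℝ | ∃ w' : Finset X × Finset Y → ℝ,
      SmoothRectFeasible S f ε z₀ w' ∧ v = ∑ R : Finset X × Finset Y, w' R} := by
    refine ⟨0, fun v hv => ?_⟩
    obtain ⟨w', ⟨h0, _, _⟩, rfl⟩ := hv
    exact Finset.sum_nonneg fun R _ => h0 R
  apply le_csInf hBne
  rintro v ⟨w₂, hw₂, rfl⟩
  obtain ⟨hfeas₂, hobj₂⟩ := aux_feasible S f ε z₀ w₂ hw₂
  calc srec S f ε z₀ ≤ ∑ R : Finset X × Finset Y, w₂ R z₀ :=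
        csInf_le hAbdd ⟨fun R => w₂ R z₀, hfeas₂, rfl⟩
    _ ≤ totalWeight w₂ := hobj₂
end

section
/- Fix finite sets X, Y, a finite output set Z, a set S ⊆ X × Y of valid inputs, a function f : S → Z, and ε ∈ [0,1]. Then the maximum over probability distributions μ on X × Y of the optimal value of the μ-primal program (minimize ∑_{R,z} w_{R,z} over nonnegative families w subject to ∑_{(x,y) ∈ S} μ(x,y) ∑_{R ∋ (x,y)} w_{R,f(x,y)} + ∑_{(x,y) ∉ S} μ(x,y) ∑_{z} ∑_{R ∋ (x,y)} w_{R,z} ≥ 1 − ε and, for every (x,y), ∑_{z} ∑_{R ∋ (x,y)} w_{R,z} ≤ 1) equals the minimum of ∑_{R,z} w_{R,z} over families w that are ε-feasible for the relaxed partition bound of f. In particular, for every μ and every ε-feasible family w for the relaxed partition bound, w is feasible for the μ-primal program, and there exists a distribution μ* at which the two optimal values coincide. -/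
open Finset

/-- Feasibility for the `μ`-primal program of the distributional relaxed partition bound. -/
def MuPrimalFeasible {X Y Z : Type*} [Fintype X] [Fintype Y] [Fintype Z]
    [DecidableEq X] [DecidableEq Y]
    (S : Finset (X × Y)) (f : X × Y → Z) (ε : ℝ) (μ : X × Y → ℝ)
    (w : Finset X × Finset Y → Z → ℝ) : Prop :=
  (∀ R z, 0 ≤ w R z) ∧
  (1 - ε ≤ ∑ p ∈ S, μ p * coverSum w p (f p) + ∑ p ∈ Sᶜ, μ p * ∑ z, coverSum w p z) ∧
  (∀ p : X × Y, ∑ z, coverSum w p z ≤ 1)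

/-- A probability distribution on the (finite) input set. -/
def IsProbDist {X Y : Type*} [Fintype X] [Fintype Y] (μ : X × Y → ℝ) : Prop :=
  (∀ p, 0 ≤ μ p) ∧ ∑ p, μ p = 1

/-- The optimal value of the `μ`-primal program (the distributional relaxed partition
bound `bprt^μ_ε(f)`). -/
noncomputable def muPrimalValue {X Y Z : Type*} [Fintype X] [Fintype Y] [Fintype Z]
    [DecidableEq X] [DecidableEq Y]
    (S : Finset (X × Y)) (f : X × Y → Z) (ε : ℝ) (μ : X × Y → ℝ) : ℝ :=
  sInf {v : ℝ | ∃ w : Finset X × Finset Y → Z → ℝ,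
    MuPrimalFeasible S f ε μ w ∧ v = totalWeight w}

/-! The inequality `bprt^μ_ε(f) ≤ bprt_ε(f)` is immediate, since an `ε`-feasible family is
`μ`-feasible for every distribution `μ`. The reverse inequality for a suitable `μ` is Lagrangian
duality. For `ε > 0`, a hyperplane separating the convex set of achievable pairs
(success profile, cost) from the open box `{y > 1 - ε} × {t < bprt_ε(f)}` yields nonnegative
multipliers `ν` for the constraints `y_p ≥ 1 - ε`. The hyperplane is not vertical because the
partition into singleton rectangles satisfies every constraint with slack `ε`, and normalising
`ν` gives `μ`. For `ε = 0` any fully supported `μ` works: then `μ`-feasibility forces every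
constraint to be tight. -/

open Set

lemma ContinuousLinearMap.apply_pi_prod_eq_sum {ι : Type*} [Fintype ι] [DecidableEq ι]
    (φ : (ι → ℝ) × ℝ →L[ℝ] ℝ) (y : ι → ℝ) (t : ℝ) :
    φ (y, t) = ∑ i, y i * φ (Pi.single i 1, 0) + t * φ (0, 1) := by
  have hy := ((φ.comp (.inl ℝ _ ℝ)) : (ι → ℝ) →ₗ[ℝ] ℝ).pi_apply_eq_sum_univ y
  have ht : φ (0, t) = t * φ (0, 1) := by
    rw [← smul_eq_mul, ← map_smul, Prod.smul_mk, smul_zero, smul_eq_mul, mul_one]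
  rw [← φ.comp_inl_add_comp_inr]
  simp only [coe_coe] at hy
  simp [hy, ht, ← Pi.single_apply, Pi.single_comm]

lemma nonpos_of_forall_add_mul_lt {c d u : ℝ} (h : ∀ s : ℝ, 0 ≤ s → c + s * d < u) : d ≤ 0 := by
  by_contra! hd
  have := h (|u - c| / d) (by positivity)
  rw [div_mul_cancel₀ _ hd.ne'] at this
  linarith [le_abs_self (u - c)]

section Distributions

variable {X Y : Type*} [Fintype X] [Fintype Y]

lemma IsProbDist.sum_mul_const {μ : X × Y → ℝ} (hμ : IsProbDist μ) (c : ℝ) :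
    ∑ p, μ p * c = c := by
  rw [← sum_mul, hμ.2, one_mul]

noncomputable def uniformDist (X Y : Type*) [Fintype X] [Fintype Y] : X × Y → ℝ :=
  fun _ => (Fintype.card (X × Y) : ℝ)⁻¹

variable [Nonempty X] [Nonempty Y]

lemma uniformDist_pos (p : X × Y) : 0 < uniformDist X Y p := by
  unfold uniformDist
  positivity

lemma isProbDist_uniformDist : IsProbDist (uniformDist X Y) := by
  refine ⟨fun p => (uniformDist_pos p).le, ?_⟩
  simp only [uniformDist]
  rw [sum_const, card_univ, nsmul_eq_mul, mul_inv_cancel₀]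
  exact_mod_cast Fintype.card_ne_zero

lemma exists_isProbDist_smul_eq {ν : X × Y → ℝ} (hν : 0 ≤ ν) :
    ∃ μ, IsProbDist μ ∧ ν = (∑ p, ν p) • μ := by
  rcases (sum_nonneg fun p _ => hν p).eq_or_lt with hm | hm
  · refine ⟨uniformDist X Y, isProbDist_uniformDist, ?_⟩
    rw [← hm, zero_smul]
    exact funext fun p => (sum_eq_zero_iff_of_nonneg fun q _ => hν q).mp hm.symm p (mem_univ p)
  · refine ⟨(∑ p, ν p)⁻¹ • ν, ⟨fun p => mul_nonneg (inv_nonneg.mpr hm.le) (hν p), ?_⟩, ?_⟩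
    · simp [← mul_sum, hm.ne']
    · rw [smul_smul, mul_inv_cancel₀ hm.ne', one_smul]

end Distributions

section RelaxedPartition

variable {X Y Z : Type*} [Fintype X] [Fintype Y] [DecidableEq X] [DecidableEq Y]

lemma coverSum_add (w w' : Finset X × Finset Y → Z → ℝ) (p : X × Y) (z : Z) :
    coverSum (w + w') p z = coverSum w p z + coverSum w' p z := by
  simp [coverSum, sum_add_distrib]

lemma coverSum_smul (a : ℝ) (w : Finset X × Finset Y → Z → ℝ) (p : X × Y) (z : Z) :
    coverSum (a • w) p z = a * coverSum w p z := by
  simp [coverSum, mul_sum]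

open Classical in
noncomputable def singletonPartition (f : X × Y → Z) : Finset X × Finset Y → Z → ℝ :=
  fun R z => ∑ q : X × Y, if R = ({q.1}, {q.2}) ∧ f q = z then 1 else 0

open Classical in
lemma coverSum_singletonPartition (f : X × Y → Z) (p : X × Y) :
    coverSum (singletonPartition f) p = Pi.single (f p) 1 := by
  ext z
  have hmem (q : X × Y) : MemRect p ({q.1}, {q.2}) ↔ q = p := by
    simp [MemRect, Prod.ext_iff, eq_comm]
  simp only [coverSum, singletonPartition]
  rw [sum_comm]
  simp [ite_and, sum_ite_eq', hmem, Pi.single_apply, eq_comm]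

variable [Fintype Z]

def Admissible (w : Finset X × Finset Y → Z → ℝ) : Prop :=
  (∀ R z, 0 ≤ w R z) ∧ ∀ p : X × Y, ∑ z, coverSum w p z ≤ 1

noncomputable def successWeight (S : Finset (X × Y)) (f : X × Y → Z)
    (w : Finset X × Finset Y → Z → ℝ) (p : X × Y) : ℝ :=
  if p ∈ S then coverSum w p (f p) else ∑ z, coverSum w p z

variable (S : Finset (X × Y)) (f : X × Y → Z) {ε : ℝ}

lemma successWeight_add (w w' : Finset X × Finset Y → Z → ℝ) :
    successWeight S f (w + w') = successWeight S f w + successWeight S f w' := by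
  ext p
  by_cases hp : p ∈ S <;> simp [successWeight, hp, coverSum_add, sum_add_distrib]

lemma successWeight_smul (a : ℝ) (w : Finset X × Finset Y → Z → ℝ) :
    successWeight S f (a • w) = a • successWeight S f w := by
  ext p
  by_cases hp : p ∈ S <;> simp [successWeight, hp, coverSum_smul, mul_sum]

lemma totalWeight_add (w w' : Finset X × Finset Y → Z → ℝ) :
    totalWeight (w + w') = totalWeight w + totalWeight w' := by
  simp [totalWeight, sum_add_distrib]

lemma totalWeight_smul (a : ℝ) (w : Finset X × Finset Y → Z → ℝ) :
    totalWeight (a • w) = a * totalWeight w := by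
  simp [totalWeight, mul_sum]

lemma totalWeight_nonneg {w : Finset X × Finset Y → Z → ℝ} (hw : ∀ R z, 0 ≤ w R z) :
    0 ≤ totalWeight w :=
  sum_nonneg fun R _ => sum_nonneg fun z _ => hw R z

lemma convex_setOf_admissible :
    Convex ℝ {w : Finset X × Finset Y → Z → ℝ | Admissible w} := by
  rintro w ⟨hw₀, hw₁⟩ w' ⟨hw₀', hw₁'⟩ a b ha hb hab
  refine ⟨fun R z => ?_, fun p => ?_⟩
  · simp only [Pi.add_apply, Pi.smul_apply, smul_eq_mul]
    exact add_nonneg (mul_nonneg ha (hw₀ R z)) (mul_nonneg hb (hw₀' R z))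
  · simp only [coverSum_add, coverSum_smul, sum_add_distrib, ← mul_sum]
    nlinarith [hw₁ p, hw₁' p]

lemma admissible_singletonPartition : Admissible (singletonPartition f) := by
  classical
  refine ⟨fun R z => sum_nonneg fun q _ => ?_, fun p => ?_⟩
  · split_ifs <;> norm_num
  · simp [coverSum_singletonPartition]

lemma successWeight_singletonPartition : successWeight S f (singletonPartition f) = 1 := by
  classical
  ext p
  by_cases hp : p ∈ S <;> simp [successWeight, hp, coverSum_singletonPartition]

lemma Admissible.successWeight_le_one {w : Finset X × Finset Y → Z → ℝ} (hw : Admissible w)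
    (p : X × Y) : successWeight S f w p ≤ 1 := by
  unfold successWeight
  split_ifs
  · exact (single_le_sum (fun z _ => sum_nonneg fun R _ => hw.1 R z) (mem_univ (f p))).trans
      (hw.2 p)
  · exact hw.2 p

lemma relaxedFeasible_iff {w : Finset X × Finset Y → Z → ℝ} :
    RelaxedFeasible S f ε w ↔ Admissible w ∧ ∀ p, 1 - ε ≤ successWeight S f w p := by
  constructor
  · rintro ⟨hw₀, hS, hSc, hw₁⟩
    refine ⟨⟨hw₀, hw₁⟩, fun p => ?_⟩
    by_cases hp : p ∈ S <;> simp [successWeight, hp, hS, hSc]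
  · rintro ⟨⟨hw₀, hw₁⟩, h⟩
    refine ⟨hw₀, fun p hp => ?_, fun p hp => ?_, hw₁⟩ <;> simpa [successWeight, hp] using h p

lemma sum_mul_successWeight (μ : X × Y → ℝ) (w : Finset X × Finset Y → Z → ℝ) :
    ∑ p ∈ S, μ p * coverSum w p (f p) + ∑ p ∈ Sᶜ, μ p * ∑ z, coverSum w p z
      = ∑ p, μ p * successWeight S f w p := by
  rw [← sum_add_sum_compl S]
  congr 1 <;> refine sum_congr rfl fun p hp => ?_ <;> simp_all [successWeight]

lemma muPrimalFeasible_iff {μ : X × Y → ℝ} {w : Finset X × Finset Y → Z → ℝ} :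
    MuPrimalFeasible S f ε μ w ↔ Admissible w ∧ 1 - ε ≤ ∑ p, μ p * successWeight S f w p := by
  rw [MuPrimalFeasible, Admissible, sum_mul_successWeight]
  tauto

lemma RelaxedFeasible.muPrimalFeasible {μ : X × Y → ℝ} {w : Finset X × Finset Y → Z → ℝ}
    (hw : RelaxedFeasible S f ε w) (hμ : IsProbDist μ) : MuPrimalFeasible S f ε μ w := by
  rw [relaxedFeasible_iff] at hw
  refine (muPrimalFeasible_iff S f).mpr ⟨hw.1, ?_⟩
  calc 1 - ε = ∑ p, μ p * (1 - ε) := (hμ.sum_mul_const _).symm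
    _ ≤ ∑ p, μ p * successWeight S f w p :=
      sum_le_sum fun p _ => mul_le_mul_of_nonneg_left (hw.2 p) (hμ.1 p)

lemma relaxedFeasible_singletonPartition (hε : 0 ≤ ε) :
    RelaxedFeasible S f ε (singletonPartition f) :=
  (relaxedFeasible_iff S f).mpr ⟨admissible_singletonPartition f, fun p => by
    simp [successWeight_singletonPartition, hε]⟩

lemma bprt_le_totalWeight {w : Finset X × Finset Y → Z → ℝ} (hw : RelaxedFeasible S f ε w) :
    bprt S f ε ≤ totalWeight w :=
  csInf_le ⟨0, by rintro _ ⟨w, hw, rfl⟩; exact totalWeight_nonneg hw.1⟩ ⟨w, hw, rfl⟩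

lemma le_muPrimalValue (hε : 0 ≤ ε) {μ : X × Y → ℝ} (hμ : IsProbDist μ) {c : ℝ}
    (h : ∀ w, MuPrimalFeasible S f ε μ w → c ≤ totalWeight w) :
    c ≤ muPrimalValue S f ε μ := by
  refine le_csInf ⟨_, _, (relaxedFeasible_singletonPartition S f hε).muPrimalFeasible S f hμ,
    rfl⟩ ?_
  rintro _ ⟨w, hw, rfl⟩
  exact h w hw

lemma muPrimalValue_le_bprt (hε : 0 ≤ ε) {μ : X × Y → ℝ} (hμ : IsProbDist μ) :
    muPrimalValue S f ε μ ≤ bprt S f ε :=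
  csInf_le_csInf ⟨0, by rintro _ ⟨w, hw, rfl⟩; exact totalWeight_nonneg hw.1⟩
    ⟨_, _, relaxedFeasible_singletonPartition S f hε, rfl⟩
    fun _ ⟨w, hw, hv⟩ => ⟨w, hw.muPrimalFeasible S f hμ, hv⟩

lemma relaxedFeasible_zero_of_muPrimalFeasible_zero {μ : X × Y → ℝ} (hμ : IsProbDist μ)
    (hμ_pos : ∀ p, 0 < μ p) {w : Finset X × Finset Y → Z → ℝ}
    (hw : MuPrimalFeasible S f 0 μ w) : RelaxedFeasible S f 0 w := by
  rw [muPrimalFeasible_iff, sub_zero] at hw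
  refine (relaxedFeasible_iff S f).mpr ⟨hw.1, fun p => ?_⟩
  have hdeficit_nonneg (q : X × Y) : 0 ≤ μ q * (1 - successWeight S f w q) :=
    mul_nonneg (hμ.1 q) (sub_nonneg.mpr (hw.1.successWeight_le_one S f q))
  have hdeficit : ∑ q, μ q * (1 - successWeight S f w q) = 0 := by
    refine le_antisymm ?_ (sum_nonneg fun q _ => hdeficit_nonneg q)
    simp only [mul_sub, sum_sub_distrib, hμ.sum_mul_const]
    linarith [hw.2]
  have hp := (sum_eq_zero_iff_of_nonneg fun q _ => hdeficit_nonneg q).mp hdeficit p (mem_univ p)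
  rcases mul_eq_zero.mp hp with h | h
  · exact absurd h (hμ_pos p).ne'
  · linarith

def achievable : Set ((X × Y → ℝ) × ℝ) :=
  {q | ∃ w, Admissible w ∧ q.1 ≤ successWeight S f w ∧ totalWeight w ≤ q.2}

lemma convex_achievable : Convex ℝ (achievable S f) := by
  rintro _ ⟨w, hw, hy, ht⟩ _ ⟨w', hw', hy', ht'⟩ a b ha hb hab
  refine ⟨a • w + b • w', convex_setOf_admissible hw hw' ha hb hab, ?_, ?_⟩
  · simp only [Prod.fst_add, Prod.smul_fst, successWeight_add, successWeight_smul]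
    gcongr
  · simp only [Prod.snd_add, Prod.smul_snd, totalWeight_add, totalWeight_smul, smul_eq_mul]
    gcongr

lemma disjoint_achievable :
    Disjoint (univ.pi (fun _ => Ioi (1 - ε)) ×ˢ Iio (bprt S f ε)) (achievable S f) := by
  rw [Set.disjoint_left]
  rintro ⟨y, t⟩ ⟨hy, ht⟩ ⟨w, hw, hyw, hwt⟩
  simp only [Set.mem_pi, Set.mem_univ, Set.mem_Ioi, forall_const, Set.mem_Iio] at hy ht
  have hfeas := (relaxedFeasible_iff S f).mpr ⟨hw, fun p => (hy p).le.trans (hyw p)⟩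
  linarith [bprt_le_totalWeight S f hfeas]

theorem exists_separating_hyperplane :
    ∃ (ν : X × Y → ℝ) (lam u : ℝ), 0 ≤ ν ∧ 0 ≤ lam ∧
      (∀ (y : X × Y → ℝ) (t : ℝ), (∀ p, 1 - ε < y p) → t < bprt S f ε →
        t * lam - ∑ p, ν p * y p < u) ∧
      bprt S f ε * lam - ∑ p, ν p * (1 - ε) ≤ u ∧
      ∀ w, Admissible w → u ≤ totalWeight w * lam - ∑ p, ν p * successWeight S f w p := by
  classical
  set U : Set ((X × Y → ℝ) × ℝ) := univ.pi (fun _ => Ioi (1 - ε)) ×ˢ Iio (bprt S f ε)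
  have hU : IsOpen U := (isOpen_set_pi finite_univ fun _ _ => isOpen_Ioi).prod isOpen_Iio
  have hUconv : Convex ℝ U := (convex_pi fun _ _ => convex_Ioi _).prod (convex_Iio _)
  obtain ⟨φ, u, hφU, hφA⟩ :=
    geometric_hahn_banach_open hUconv hU (convex_achievable S f) (disjoint_achievable S f)
  set ν : X × Y → ℝ := fun p => -φ (Pi.single p 1, 0)
  set lam := φ (0, 1)
  have hφ (y : X × Y → ℝ) (t : ℝ) : φ (y, t) = t * lam - ∑ p, ν p * y p := by
    rw [φ.apply_pi_prod_eq_sum]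
    simp only [ν, lam, neg_mul, sum_neg_distrib, sub_neg_eq_add, mul_comm (y _)]
    ring
  have hmemU (y : X × Y → ℝ) (t : ℝ) : (y, t) ∈ U ↔ (∀ p, 1 - ε < y p) ∧ t < bprt S f ε := by
    simp [U]
  set a : (X × Y → ℝ) × ℝ := (fun _ => 2 - ε, bprt S f ε - 1)
  have hrec (d : (X × Y → ℝ) × ℝ) (hd₁ : 0 ≤ d.1) (hd₂ : d.2 ≤ 0) : φ d ≤ 0 := by
    refine nonpos_of_forall_add_mul_lt (c := φ a) (u := u) fun s hs => ?_
    have hmem : a + s • d ∈ U := by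
      rw [← Prod.mk.eta (p := _ + _), hmemU]
      simp only [a, Prod.fst_add, Prod.snd_add, Prod.smul_fst, Prod.smul_snd, Pi.add_apply,
        Pi.smul_apply, smul_eq_mul]
      exact ⟨fun p => by nlinarith [show 0 ≤ d.1 p from hd₁ p], by nlinarith⟩
    simpa only [map_add, map_smul, smul_eq_mul] using hφU _ hmem
  refine ⟨ν, lam, u, fun p => ?_, ?_, fun y t hy ht => ?_, ?_, fun w hw => ?_⟩
  · have := hrec (Pi.single p 1, 0) (by simp [Pi.single_nonneg]) le_rfl
    simp only [ν, Pi.zero_apply]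
    linarith
  · have := hrec (0, -1) le_rfl (by norm_num)
    rw [hφ] at this
    simpa using this
  · rw [← hφ]
    exact hφU _ ((hmemU y t).mpr ⟨hy, ht⟩)
  · rw [← hφ]
    refine (isClosed_le φ.continuous continuous_const).closure_subset_iff.mpr
      (fun q hq => (hφU q hq).le) ?_
    rw [closure_prod_eq, closure_pi_set, closure_Iio, closure_Ioi]
    simp
  · rw [← hφ]
    exact hφA _ ⟨w, hw, le_rfl, le_rfl⟩

theorem exists_lagrange_multipliers (hε : 0 < ε) :
    ∃ ν : X × Y → ℝ, 0 ≤ ν ∧ ∀ w, Admissible w →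
      bprt S f ε ≤ totalWeight w + ∑ p, ν p * (1 - ε - successWeight S f w p) := by
  obtain ⟨ν, lam, u, hν, hlam, hbox, hcorner, hA⟩ := exists_separating_hyperplane S f (ε := ε)
  have hlam_pos : 0 < lam := by
    refine hlam.lt_of_ne fun h0 => ?_
    have h1 := hA _ (admissible_singletonPartition f)
    have h2 := hbox (fun _ => 2 - ε) (bprt S f ε - 1) (fun _ => by linarith) (by linarith)
    simp only [successWeight_singletonPartition, Pi.one_apply, mul_one, ← sum_mul, ← h0,
      mul_zero, zero_sub] at h1 h2 hcorner
    have hm : ∑ p, ν p = 0 := le_antisymm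
      (nonpos_of_mul_nonpos_right (by linarith) hε) (sum_nonneg fun p _ => hν p)
    rw [hm] at h1 h2
    linarith
  refine ⟨lam⁻¹ • ν, smul_nonneg (inv_nonneg.mpr hlam) hν, fun w hw => ?_⟩
  have key := hcorner.trans (hA w hw)
  rw [← mul_le_mul_iff_of_pos_left hlam_pos]
  simp only [Pi.smul_apply, smul_eq_mul, mul_assoc, ← mul_sum]
  rw [mul_add, ← mul_assoc, mul_inv_cancel₀ hlam_pos.ne', one_mul]
  simp only [mul_sub, sum_sub_distrib] at key ⊢
  linarith

theorem exists_isProbDist_bprt_le_of_multipliers [Nonempty X] [Nonempty Y] (hε : 0 ≤ ε)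
    {ν : X × Y → ℝ} (hν : 0 ≤ ν) (hmul : ∀ w, Admissible w →
      bprt S f ε ≤ totalWeight w + ∑ p, ν p * (1 - ε - successWeight S f w p)) :
    ∃ μ, IsProbDist μ ∧ bprt S f ε ≤ muPrimalValue S f ε μ := by
  obtain ⟨μ, hμ, hνμ⟩ := exists_isProbDist_smul_eq hν
  set m := ∑ p, ν p
  have hm : 0 ≤ m := sum_nonneg fun p _ => hν p
  refine ⟨μ, hμ, le_muPrimalValue S f hε hμ fun w hw => ?_⟩
  rw [muPrimalFeasible_iff] at hw
  have hpenalty : ∑ p, ν p * (1 - ε - successWeight S f w p)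
      = m * (1 - ε - ∑ p, μ p * successWeight S f w p) := by
    rw [hνμ]
    simp only [Pi.smul_apply, smul_eq_mul, mul_assoc, ← mul_sum, mul_sub, sum_sub_distrib,
      hμ.sum_mul_const]
  have := hmul w hw.1
  rw [hpenalty] at this
  nlinarith [hw.2]

theorem exists_isProbDist_bprt_le_muPrimalValue [Nonempty X] [Nonempty Y] (hε : 0 ≤ ε) :
    ∃ μ, IsProbDist μ ∧ bprt S f ε ≤ muPrimalValue S f ε μ := by
  rcases hε.eq_or_lt with rfl | hε
  · refine ⟨uniformDist X Y, isProbDist_uniformDist, le_muPrimalValue S f le_rfl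
      isProbDist_uniformDist fun w hw => bprt_le_totalWeight S f ?_⟩
    exact relaxedFeasible_zero_of_muPrimalFeasible_zero S f isProbDist_uniformDist
      uniformDist_pos hw
  · obtain ⟨ν, hν, hmul⟩ := exists_lagrange_multipliers S f hε
    exact exists_isProbDist_bprt_le_of_multipliers S f hε.le hν hmul

end RelaxedPartition

/-- The maximum over distributions `μ` of the optimal value of the
`μ`-primal program equals the relaxed partition bound `bprt_ε(f)`; every `ε`-feasible
family is feasible for every `μ`-primal program; and there is a distribution `μ*` at
which the two optimal values coincide. -/
theorem statement_9 {X Y Z : Type*} [Fintype X] [Fintype Y] [Fintype Z]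
    [Nonempty X] [Nonempty Y]
    [DecidableEq X] [DecidableEq Y]
    (S : Finset (X × Y)) (f : X × Y → Z) (ε : ℝ) (hε : ε ∈ Set.Icc (0 : ℝ) 1) :
    (∀ μ : X × Y → ℝ, IsProbDist μ →
      ∀ w : Finset X × Finset Y → Z → ℝ, RelaxedFeasible S f ε w →
        MuPrimalFeasible S f ε μ w) ∧
    sSup {v : ℝ | ∃ μ : X × Y → ℝ, IsProbDist μ ∧ v = muPrimalValue S f ε μ}
      = bprt S f ε ∧
    ∃ μ : X × Y → ℝ, IsProbDist μ ∧ muPrimalValue S f ε μ = bprt S f ε := by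
  obtain ⟨μ, hμ, hle⟩ := exists_isProbDist_bprt_le_muPrimalValue S f hε.1
  have hopt : muPrimalValue S f ε μ = bprt S f ε :=
    (muPrimalValue_le_bprt S f hε.1 hμ).antisymm hle
  refine ⟨fun μ hμ w hw => hw.muPrimalFeasible S f hμ, ?_, μ, hμ, hopt⟩
  refine IsGreatest.csSup_eq ⟨⟨μ, hμ, hopt.symm⟩, ?_⟩
  rintro _ ⟨μ', hμ', rfl⟩
  exact muPrimalValue_le_bprt S f hε.1 hμ'
end

section
/- Fix finite sets X, Y, a set S ⊆ X × Y, a function f : S → {−1, 1}, reals ε ≥ 0, δ ∈ (0, 1], β > 0, and a probability distribution μ on X × Y. Assume the corruption property: for every rectangle R in X × Y, if μ(R) > β then μ(R ∩ f⁻¹(1)) > δ · μ(R ∩ f⁻¹(−1)). Define α : X × Y → ℝ≥0 by α(x,y) = μ(x,y)/β if (x,y) ∈ f⁻¹(−1), α(x,y) = μ(x,y)/(δβ) if (x,y) ∈ f⁻¹(1), and α(x,y) = 0 if (x,y) ∉ S. Then: (a) for every rectangle R, ∑_{(x,y) ∈ R ∩ f⁻¹(−1)} α(x,y) − ∑_{(x,y)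 ∈ R ∩ f⁻¹(1)} α(x,y) ≤ 1; and (b) (1 − ε) ∑_{(x,y) ∈ f⁻¹(−1)} α(x,y) − ε ∑_{(x,y) ∈ f⁻¹(1)} α(x,y) ≥ (1/β)(μ(f⁻¹(−1)) − ε/δ). -/
/-!
On a rectangle `R`, write `N` and `P` for the `μ`-masses of `R ∩ f⁻¹(-1)` and `R ∩ f⁻¹(1)`,
so that the left side of (a) is `N/β - P/(δβ)`. If `μ(R) > β`, corruption gives `δN < P` and this
is negative; otherwise `N ≤ μ(R) ≤ β` bounds it by `1`. For (b), the objective exceeds the bound by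
`ε/(δβ) · (1 - δN - P)` with `N`, `P` the masses of `f⁻¹(-1)` and `f⁻¹(1)`, which is nonnegative
because `δN + P ≤ N + P ≤ 1`.
-/

open Finset

section CorruptionBound

variable {ι : Type*}

lemma sum_eq_sum_div_of_eq_div {s : Finset ι} {α μ : ι → ℝ} {c : ℝ}
    (h : ∀ p ∈ s, α p = μ p / c) : ∑ p ∈ s, α p = (∑ p ∈ s, μ p) / c := by
  rw [sum_div]
  exact sum_congr rfl h

lemma sum_filter_add_sum_filter_le {M : Type*} [AddCommMonoid M] [PartialOrder M]
    [IsOrderedAddMonoid M] {s : Finset ι} {g : ι → M} (hg : ∀ i ∈ s, 0 ≤ g i)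
    {p q : ι → Prop} [DecidablePred p] [DecidablePred q] (hpq : ∀ i, p i → ¬q i) :
    ∑ i ∈ s.filter p, g i + ∑ i ∈ s.filter q, g i ≤ ∑ i ∈ s, g i := by
  classical
  rw [← sum_union (disjoint_filter.2 fun i _ => hpq i)]
  exact sum_le_sum_of_subset_of_nonneg (union_subset (filter_subset _ _) (filter_subset _ _))
    fun i hi _ => hg i hi

lemma div_sub_div_mul_le_one {N P M δ β : ℝ} (hP : 0 ≤ P) (hNM : N ≤ M)
    (hδ : 0 < δ) (hβ : 0 < β) (hcorr : β < M → δ * N < P) :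
    N / β - P / (δ * β) ≤ 1 := by
  have hPdiv : 0 ≤ P / (δ * β) := by positivity
  rcases lt_or_ge β M with hM | hM
  · have : N / β ≤ P / (δ * β) := by
      rw [div_le_div_iff₀ hβ (by positivity)]
      nlinarith [hcorr hM]
    linarith
  · have : N / β ≤ 1 := (div_le_one hβ).2 (hNM.trans hM)
    linarith

lemma div_sub_le_objective {N P ε δ β : ℝ} (hN : 0 ≤ N) (hNP : N + P ≤ 1) (hε : 0 ≤ ε)
    (hδ : 0 < δ) (hδ1 : δ ≤ 1) (hβ : 0 < β) :
    1 / β * (N - ε / δ) ≤ (1 - ε) * (N / β) - ε * (P / (δ * β)) := by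
  have hgap : (1 - ε) * (N / β) - ε * (P / (δ * β)) - 1 / β * (N - ε / δ)
      = ε / (δ * β) * (1 - δ * N - P) := by
    field_simp
    ring
  have hmass : 0 ≤ 1 - δ * N - P := by nlinarith [mul_nonneg (sub_nonneg.2 hδ1) hN]
  linarith [mul_nonneg (by positivity : 0 ≤ ε / (δ * β)) hmass]

end CorruptionBound

theorem statement_10_general {X Y : Type*} [Fintype X] [Fintype Y]
    [DecidableEq X] [DecidableEq Y]
    (S : Finset (X × Y)) (f : X × Y → ℤ)
    (ε δ β : ℝ) (hε : 0 ≤ ε) (hδ : 0 < δ) (hδ1 : δ ≤ 1) (hβ : 0 < β)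
    (μ : X × Y → ℝ) (hμ0 : ∀ p, 0 ≤ μ p) (hμ1 : ∑ p, μ p = 1)
    (hcorr : ∀ R : Finset X × Finset Y,
      β < ∑ p ∈ R.1 ×ˢ R.2, μ p →
      δ * ∑ p ∈ (R.1 ×ˢ R.2).filter (fun p => p ∈ S ∧ f p = -1), μ p <
        ∑ p ∈ (R.1 ×ˢ R.2).filter (fun p => p ∈ S ∧ f p = 1), μ p)
    (α : X × Y → ℝ)
    (hαneg : ∀ p ∈ S, f p = -1 → α p = μ p / β)
    (hαpos : ∀ p ∈ S, f p = 1 → α p = μ p / (δ * β)) :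
    (∀ R : Finset X × Finset Y,
      ∑ p ∈ (R.1 ×ˢ R.2).filter (fun p => p ∈ S ∧ f p = -1), α p
        - ∑ p ∈ (R.1 ×ˢ R.2).filter (fun p => p ∈ S ∧ f p = 1), α p ≤ 1) ∧
    (1 / β) * ((∑ p ∈ univ.filter (fun p : X × Y => p ∈ S ∧ f p = -1), μ p) - ε / δ) ≤
      (1 - ε) * ∑ p ∈ univ.filter (fun p : X × Y => p ∈ S ∧ f p = -1), α p
        - ε * ∑ p ∈ univ.filter (fun p : X × Y => p ∈ S ∧ f p = 1), α p := by
  have hneg (T : Finset (X × Y)) : ∑ p ∈ T.filter (fun p => p ∈ S ∧ f p = -1), α p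
      = (∑ p ∈ T.filter (fun p => p ∈ S ∧ f p = -1), μ p) / β :=
    sum_eq_sum_div_of_eq_div fun p hp => hαneg p (mem_filter.1 hp).2.1 (mem_filter.1 hp).2.2
  have hpos (T : Finset (X × Y)) : ∑ p ∈ T.filter (fun p => p ∈ S ∧ f p = 1), α p
      = (∑ p ∈ T.filter (fun p => p ∈ S ∧ f p = 1), μ p) / (δ * β) :=
    sum_eq_sum_div_of_eq_div fun p hp => hαpos p (mem_filter.1 hp).2.1 (mem_filter.1 hp).2.2
  refine ⟨fun R => ?_, ?_⟩
  · rw [hneg, hpos]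
    exact div_sub_div_mul_le_one (sum_nonneg fun p _ => hμ0 p)
      (sum_le_sum_of_subset_of_nonneg (filter_subset _ _) fun p _ _ => hμ0 p) hδ hβ (hcorr R)
  · rw [hneg, hpos]
    refine div_sub_le_objective (sum_nonneg fun p _ => hμ0 p) ?_ hε hδ hδ1 hβ
    rw [← hμ1]
    exact sum_filter_add_sum_filter_le (fun p _ => hμ0 p)
      fun p hn hp => by norm_num [hn.2] at hp

/-- The corruption property yields a feasible point of the dual form of
the rectangle/corruption bound whose objective value is at least
`(1/β)(μ(f⁻¹(-1)) - ε/δ)`. -/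
theorem statement_10 {X Y : Type*} [Fintype X] [Fintype Y]
    [DecidableEq X] [DecidableEq Y]
    (S : Finset (X × Y)) (f : X × Y → ℤ)
    (hf : ∀ p ∈ S, f p = -1 ∨ f p = 1)
    (ε δ β : ℝ) (hε : 0 ≤ ε) (hδ : 0 < δ) (hδ1 : δ ≤ 1) (hβ : 0 < β)
    (μ : X × Y → ℝ) (hμ0 : ∀ p, 0 ≤ μ p) (hμ1 : ∑ p, μ p = 1)
    (hcorr : ∀ R : Finset X × Finset Y,
      β < ∑ p ∈ R.1 ×ˢ R.2, μ p →
      δ * ∑ p ∈ (R.1 ×ˢ R.2).filter (fun p => p ∈ S ∧ f p = -1), μ p <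
        ∑ p ∈ (R.1 ×ˢ R.2).filter (fun p => p ∈ S ∧ f p = 1), μ p)
    (α : X × Y → ℝ)
    (hαneg : ∀ p ∈ S, f p = -1 → α p = μ p / β)
    (hαpos : ∀ p ∈ S, f p = 1 → α p = μ p / (δ * β))
    (hαout : ∀ p ∉ S, α p = 0) :
    (∀ R : Finset X × Finset Y,
      ∑ p ∈ (R.1 ×ˢ R.2).filter (fun p => p ∈ S ∧ f p = -1), α p
        - ∑ p ∈ (R.1 ×ˢ R.2).filter (fun p => p ∈ S ∧ f p = 1), α p ≤ 1) ∧
    (1 / β) * ((∑ p ∈ univ.filter (fun p : X × Y => p ∈ S ∧ f p = -1), μ p) - ε / δ) ≤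
      (1 - ε) * ∑ p ∈ univ.filter (fun p : X × Y => p ∈ S ∧ f p = -1), α p
        - ε * ∑ p ∈ univ.filter (fun p : X × Y => p ∈ S ∧ f p = 1), α p :=
  statement_10_general S f ε δ β hε hδ hδ1 hβ μ hμ0 hμ1 hcorr α hαneg hαpos
end

section
/- Fix finite sets X, Y, a set S ⊆ X × Y, a function f : S → {0, 1}, ε ∈ [0,1], a real t > 0, a probability distribution σ on X × Y, and a probability distribution μ on X × Y with μ(S) = 1. Assume: (a) for every (x,y) ∈ S, 2μ(x,y) ≥ 0.8·σ(x,y); and (b) for every rectangle R in X × Y and every b ∈ {0,1}, 2μ(R ∩ f⁻¹(b)) ≥ 0.8·σ(R) − 1/t. Then every family w of nonnegative reals w_{R,z} (indexed by rectangles R and z ∈ {0,1}) that is ε-feasible for the relaxed partition bound of f satisfies ∑_{R,z} w_{R,z} ≥ t·(0.8 − 2.8ε). -/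
open Finset

/-!
Weak LP duality for the relaxed partition bound. Weight the covering constraint at each input `p`
(for the output `f p` if `p ∈ S`, for all outputs otherwise) by `α p ≥ 0` and the packing
constraint `∑_z ∑_{R ∋ p} w_{R,z} ≤ 1` by `β p ≥ 0`; swapping the order of summation gives
`(1 - ε) ∑ α - ∑ β ≤ ∑ w` as soon as `∑_{p ∈ R} (α_z p - β p) ≤ 1` for every rectangle `R` and
output `z`. For `α = 2tμ` on `S`, `α = 0.8tσ` off `S` and `β = α - 0.8tσ`, this dual constraint at
`(R, z)` is `t` times the rectangle inequality for `R` and the other output `b ≠ z`, and the dual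
objective is at least `t (0.8 - 2.8ε)`.
-/

section WeakDuality

variable {X Y Z : Type*} [DecidableEq X] [DecidableEq Y]

/-- The weight `α_z p` of the paper's dual constraint for the rectangles containing `p`. -/
def dualCoeff [DecidableEq Z] (S : Finset (X × Y)) (f : X × Y → Z) (α : X × Y → ℝ)
    (z : Z) (p : X × Y) : ℝ :=
  if p ∈ S then (if f p = z then α p else 0) else α p

variable [Fintype X] [Fintype Y] [Fintype Z]

lemma product_eq_filter_memRect (R : Finset X × Finset Y) :
    R.1 ×ˢ R.2 = univ.filter (fun p : X × Y => MemRect p R) := by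
  ext p
  simp only [mem_product, mem_filter, mem_univ, true_and]
  rfl

lemma sum_weight_mul_sum_rect_eq_sum_mul_coverSum (w : Finset X × Finset Y → Z → ℝ)
    (g : Z → X × Y → ℝ) :
    ∑ R, ∑ z, w R z * ∑ p ∈ R.1 ×ˢ R.2, g z p = ∑ p, ∑ z, g z p * coverSum w p z := by
  simp_rw [product_eq_filter_memRect, coverSum, mul_sum, sum_filter]
  rw [sum_comm_cycle]
  refine sum_congr rfl fun p _ => ?_
  rw [sum_comm]
  refine sum_congr rfl fun z _ => sum_congr rfl fun R _ => ?_
  split_ifs <;> ring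

variable [DecidableEq Z] {S : Finset (X × Y)} {f : X × Y → Z} {ε : ℝ}
  {w : Finset X × Finset Y → Z → ℝ} {α β : X × Y → ℝ}

lemma RelaxedFeasible.le_sum_dualCoeff_mul_coverSum (hw : RelaxedFeasible S f ε w)
    (hα : ∀ p, 0 ≤ α p) (hβ : ∀ p, 0 ≤ β p) (p : X × Y) :
    (1 - ε) * α p - β p ≤ ∑ z, (dualCoeff S f α z p - β p) * coverSum w p z := by
  obtain ⟨-, hwS, hwNS, hw1⟩ := hw
  have hβ_le : β p * ∑ z, coverSum w p z ≤ β p :=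
    mul_le_of_le_one_right (hβ p) (hw1 p)
  have hα_le : (1 - ε) * α p ≤ ∑ z, dualCoeff S f α z p * coverSum w p z := by
    by_cases hp : p ∈ S
    · simp only [dualCoeff, hp, if_true, ite_mul, zero_mul, sum_ite_eq, mem_univ]
      rw [mul_comm]
      exact mul_le_mul_of_nonneg_left (hwS p hp) (hα p)
    · simp only [dualCoeff, hp, if_false, ← mul_sum]
      rw [mul_comm]
      exact mul_le_mul_of_nonneg_left (hwNS p hp) (hα p)
  simp only [sub_mul, sum_sub_distrib, ← mul_sum]
  linarith

theorem RelaxedFeasible.dual_objective_le_totalWeight (hw : RelaxedFeasible S f ε w)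
    (hα : ∀ p, 0 ≤ α p) (hβ : ∀ p, 0 ≤ β p)
    (hdual : ∀ (R : Finset X × Finset Y) z, ∑ p ∈ R.1 ×ˢ R.2, (dualCoeff S f α z p - β p) ≤ 1) :
    (1 - ε) * ∑ p, α p - ∑ p, β p ≤ totalWeight w :=
  calc (1 - ε) * ∑ p, α p - ∑ p, β p
      = ∑ p, ((1 - ε) * α p - β p) := by rw [sum_sub_distrib, mul_sum]
    _ ≤ ∑ p, ∑ z, (dualCoeff S f α z p - β p) * coverSum w p z :=
      sum_le_sum fun p _ => hw.le_sum_dualCoeff_mul_coverSum hα hβ p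
    _ = ∑ R, ∑ z, w R z * ∑ p ∈ R.1 ×ˢ R.2, (dualCoeff S f α z p - β p) :=
      (sum_weight_mul_sum_rect_eq_sum_mul_coverSum w _).symm
    _ ≤ totalWeight w :=
      sum_le_sum fun R _ => sum_le_sum fun z _ => mul_le_of_le_one_right (hw.1 R z) (hdual R z)

end WeakDuality

lemma fin_two_eq_add_one_iff_ne (a b : Fin 2) : a = b + 1 ↔ a ≠ b := by
  revert a b
  decide

section RectangleDual

variable {X Y : Type*} [DecidableEq X] [DecidableEq Y]
  (S : Finset (X × Y)) (f : X × Y → Fin 2) (t c d : ℝ) (σ μ : X × Y → ℝ)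

/-- The paper's `α`, with the constants `0.8, 2` generalised to `c, d`. -/
def rectDualAlpha (p : X × Y) : ℝ :=
  if p ∈ S then d * t * μ p else c * t * σ p

/-- The paper's `β`, with the constants `0.8, 2` generalised to `c, d`. -/
def rectDualBeta (p : X × Y) : ℝ :=
  if p ∈ S then d * t * μ p - c * t * σ p else 0

lemma dualCoeff_rectDualAlpha_sub_rectDualBeta (z : Fin 2) (p : X × Y) :
    dualCoeff S f (rectDualAlpha S t c d σ μ) z p - rectDualBeta S t c d σ μ p =
      c * t * σ p - d * t * (if p ∈ S ∧ f p = z + 1 then μ p else 0) := by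
  simp only [dualCoeff, rectDualAlpha, rectDualBeta, fin_two_eq_add_one_iff_ne]
  split_ifs <;> simp_all

variable {S f t c d σ μ}

lemma sum_rect_dualCoeff_sub_rectDualBeta_le_one (ht : 0 < t)
    (hrect : ∀ (R : Finset X × Finset Y) (b : Fin 2),
      c * (∑ p ∈ R.1 ×ˢ R.2, σ p) - 1 / t ≤
        d * ∑ p ∈ (R.1 ×ˢ R.2).filter (fun p => p ∈ S ∧ f p = b), μ p)
    (R : Finset X × Finset Y) (z : Fin 2) :
    ∑ p ∈ R.1 ×ˢ R.2,
      (dualCoeff S f (rectDualAlpha S t c d σ μ) z p - rectDualBeta S t c d σ μ p) ≤ 1 := by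
  have h := mul_le_mul_of_nonneg_left (hrect R (z + 1)) ht.le
  rw [mul_sub, mul_one_div_cancel ht.ne', sum_filter] at h
  simp only [dualCoeff_rectDualAlpha_sub_rectDualBeta, sum_sub_distrib, ← mul_sum]
  linarith

lemma rectDualAlpha_nonneg (ht : 0 ≤ t) (hc : 0 ≤ c) (hd : 0 ≤ d) (hσ0 : ∀ p, 0 ≤ σ p)
    (hμ0 : ∀ p, 0 ≤ μ p) (p : X × Y) : 0 ≤ rectDualAlpha S t c d σ μ p := by
  unfold rectDualAlpha
  split_ifs
  · exact mul_nonneg (mul_nonneg hd ht) (hμ0 p)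
  · exact mul_nonneg (mul_nonneg hc ht) (hσ0 p)

lemma rectDualBeta_nonneg (ht : 0 ≤ t) (hpt : ∀ p ∈ S, c * σ p ≤ d * μ p) (p : X × Y) :
    0 ≤ rectDualBeta S t c d σ μ p := by
  unfold rectDualBeta
  split_ifs with hp
  · linarith [mul_le_mul_of_nonneg_left (hpt p hp) ht]
  · exact le_rfl

lemma rectDualAlpha_eq_add_rectDualBeta (p : X × Y) :
    rectDualAlpha S t c d σ μ p = c * t * σ p + rectDualBeta S t c d σ μ p := by
  unfold rectDualAlpha rectDualBeta
  split_ifs <;> ring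

lemma sum_rectDualBeta [Fintype X] [Fintype Y] (hμS : ∑ p ∈ S, μ p = 1) :
    ∑ p, rectDualBeta S t c d σ μ p = d * t - c * t * ∑ p ∈ S, σ p := by
  simp only [rectDualBeta]
  rw [sum_ite_mem, univ_inter, sum_sub_distrib, ← mul_sum, ← mul_sum, hμS, mul_one]

lemma sum_rectDualAlpha [Fintype X] [Fintype Y] (hσ1 : ∑ p, σ p = 1)
    (hμS : ∑ p ∈ S, μ p = 1) :
    ∑ p, rectDualAlpha S t c d σ μ p = d * t + c * t * (1 - ∑ p ∈ S, σ p) := by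
  simp only [rectDualAlpha_eq_add_rectDualBeta, sum_add_distrib, ← mul_sum, hσ1,
    sum_rectDualBeta hμS]
  ring

lemma le_rectDual_objective [Fintype X] [Fintype Y] {ε : ℝ} (hε : 0 ≤ ε) (ht : 0 ≤ t)
    (hc : 0 ≤ c) (hσ0 : ∀ p, 0 ≤ σ p) (hσ1 : ∑ p, σ p = 1) (hμS : ∑ p ∈ S, μ p = 1) :
    t * (c - (c + d) * ε) ≤
      (1 - ε) * ∑ p, rectDualAlpha S t c d σ μ p - ∑ p, rectDualBeta S t c d σ μ p := by
  have hσS : 0 ≤ ∑ p ∈ S, σ p := sum_nonneg fun p _ => hσ0 p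
  rw [sum_rectDualAlpha hσ1 hμS, sum_rectDualBeta hμS]
  linarith [mul_nonneg (mul_nonneg (mul_nonneg hε ht) hc) hσS]

end RectangleDual

theorem statement_11_general {X Y : Type*} [Fintype X] [Fintype Y]
    [DecidableEq X] [DecidableEq Y]
    (S : Finset (X × Y)) (f : X × Y → Fin 2)
    (ε : ℝ) (hε : ε ∈ Set.Icc (0 : ℝ) 1)
    (t : ℝ) (ht : 0 < t)
    (σ μ : X × Y → ℝ)
    (hσ0 : ∀ p, 0 ≤ σ p) (hσ1 : ∑ p, σ p = 1)
    (hμ0 : ∀ p, 0 ≤ μ p)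
    (hμS : ∑ p ∈ S, μ p = 1)
    (hpt : ∀ p ∈ S, 0.8 * σ p ≤ 2 * μ p)
    (hrect : ∀ (R : Finset X × Finset Y) (b : Fin 2),
      0.8 * (∑ p ∈ R.1 ×ˢ R.2, σ p) - 1 / t ≤
        2 * ∑ p ∈ (R.1 ×ˢ R.2).filter (fun p => p ∈ S ∧ f p = b), μ p)
    (w : Finset X × Finset Y → Fin 2 → ℝ)
    (hw : RelaxedFeasible S f ε w) :
    t * (0.8 - 2.8 * ε) ≤ totalWeight w :=
  calc t * (0.8 - 2.8 * ε) = t * (0.8 - (0.8 + 2) * ε) := by norm_num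
    _ ≤ (1 - ε) * ∑ p, rectDualAlpha S t 0.8 2 σ μ p - ∑ p, rectDualBeta S t 0.8 2 σ μ p :=
      le_rectDual_objective hε.1 ht.le (by norm_num) hσ0 hσ1 hμS
    _ ≤ totalWeight w :=
      hw.dual_objective_le_totalWeight
        (rectDualAlpha_nonneg ht.le (by norm_num) (by norm_num) hσ0 hμ0)
        (rectDualBeta_nonneg ht.le hpt)
        (sum_rect_dualCoeff_sub_rectDualBeta_le_one ht hrect)

/-- The Klartag–Regev-style rectangle inequality implies the lower bound
`t·(0.8 − 2.8 ε)` on the objective value of every `ε`-feasible family for the relaxed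
partition bound. -/
theorem statement_11 {X Y : Type*} [Fintype X] [Fintype Y]
    [DecidableEq X] [DecidableEq Y]
    (S : Finset (X × Y)) (f : X × Y → Fin 2)
    (ε : ℝ) (hε : ε ∈ Set.Icc (0 : ℝ) 1)
    (t : ℝ) (ht : 0 < t)
    (σ μ : X × Y → ℝ)
    (hσ0 : ∀ p, 0 ≤ σ p) (hσ1 : ∑ p, σ p = 1)
    (hμ0 : ∀ p, 0 ≤ μ p) (hμ1 : ∑ p, μ p = 1)
    (hμS : ∑ p ∈ S, μ p = 1)
    (hpt : ∀ p ∈ S, 0.8 * σ p ≤ 2 * μ p)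
    (hrect : ∀ (R : Finset X × Finset Y) (b : Fin 2),
      0.8 * (∑ p ∈ R.1 ×ˢ R.2, σ p) - 1 / t ≤
        2 * ∑ p ∈ (R.1 ×ˢ R.2).filter (fun p => p ∈ S ∧ f p = b), μ p)
    (w : Finset X × Finset Y → Fin 2 → ℝ)
    (hw : RelaxedFeasible S f ε w) :
    t * (0.8 - 2.8 * ε) ≤ totalWeight w :=
  statement_11_general S f ε hε t ht σ μ hσ0 hσ1 hμ0 hμS hpt hrect w hw
end

section
/- Let T ≥ 1 and k ≥ 0 be integers, (Ω₀, P₀) a probability space, and A, B ⊆ Ω₀ events with P₀(A) = p > 0 and q·p ≤ P₀(A ∩ B) ≤ q'·p for reals q, q' ∈ [0,1]. Consider the product probability space Ω = Ω₀^T × ({0,1}^k)^{{1,…,T}} × {0,1}^k with measure P₀^{⊗T} ⊗ (uniform over functions h : {1,…,T} → {0,1}^k) ⊗ (uniform over r ∈ {0,1}^k). For ω = (ω_1, …, ω_T, h, r), let 𝒜(ω) = {i : ω_i ∈ A}, and let G be the event that 𝒜(ω) ≠ ∅ and, writing i* = min 𝒜(ω), both h(i*) = r and ω_{i*} ∈ B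 hold. Then (1 − (1 − p)^T) · q · 2^{−k} ≤ P(G) ≤ q' · 2^{−k}. -/
/-!
Split `G` according to the index `i` of the first repetition lying in `A`. That slice is a
product event: the coordinates before `i` avoid `A`, coordinate `i` lies in `A ∩ B`, and
independently `h i = r`, which has probability `2^{-k}` whatever `i` is. Hence
`P(G) = P₀(A ∩ B) · 2^{-k} · ∑_{i<T} (1 - p)^i = P₀(A ∩ B) · 2^{-k} · (1 - (1 - p)^T) / p`,
and the bounds `q p ≤ P₀(A ∩ B) ≤ q' p` give the claim.
-/

open MeasureTheory Finset

section FirstHit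

variable {Ω : Type*} {T : ℕ}

def firstHitAt (A C : Set Ω) (i : Fin T) : Set (Fin T → Ω) :=
  {x | (∀ j < i, x j ∉ A) ∧ x i ∈ C}

lemma firstHitAt_eq_pi (A C : Set Ω) (i : Fin T) :
    firstHitAt A C i =
      Set.univ.pi fun j => if j = i then C else if j < i then Aᶜ else Set.univ := by
  ext x
  simp only [firstHitAt, Set.mem_ofPred_eq, Set.mem_pi, Set.mem_univ, true_implies]
  constructor
  · rintro ⟨hbefore, hi⟩ j
    split_ifs with hji hlt
    exacts [hji ▸ hi, hbefore j hlt, trivial]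
  · intro hx
    refine ⟨fun j hj => ?_, by simpa using hx i⟩
    simpa [hj.ne, hj] using hx j

lemma firstHitAt_disjoint {A C : Set Ω} (hCA : C ⊆ A) :
    Pairwise (Function.onFun Disjoint (firstHitAt (T := T) A C)) := by
  refine pairwise_iff_lt.mpr fun i j hij => Set.disjoint_left.mpr ?_
  rintro x ⟨-, hi⟩ ⟨hbefore, -⟩
  exact hbefore i hij (hCA hi)

lemma setOf_firstHit_eq_iUnion {β : Type*} (A B : Set Ω) (H : Fin T → β → Prop) :
    {ω : (Fin T → Ω) × β | ∃ i, ω.1 i ∈ A ∧ (∀ j, ω.1 j ∈ A → i ≤ j) ∧ H i ω.2 ∧ ω.1 i ∈ B}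
      = ⋃ i, firstHitAt A (A ∩ B) i ×ˢ {b | H i b} := by
  ext ω
  simp only [firstHitAt, Set.mem_ofPred_eq, Set.mem_iUnion, Set.mem_prod, Set.mem_inter_iff]
  refine exists_congr fun i => ?_
  have hfirst : (∀ j, ω.1 j ∈ A → i ≤ j) ↔ ∀ j < i, ω.1 j ∉ A :=
    forall_congr' fun j => by rw [← not_lt]; exact imp_not_comm
  rw [hfirst]
  tauto

variable [MeasurableSpace Ω]

lemma measurableSet_firstHitAt {A C : Set Ω} (hA : MeasurableSet A) (hC : MeasurableSet C)
    (i : Fin T) : MeasurableSet (firstHitAt A C i) := by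
  rw [firstHitAt_eq_pi]
  refine MeasurableSet.univ_pi fun j => ?_
  split_ifs
  exacts [hC, hA.compl, MeasurableSet.univ]

lemma measure_pi_firstHitAt (P₀ : Measure Ω) [IsProbabilityMeasure P₀] (A C : Set Ω) (i : Fin T) :
    Measure.pi (fun _ : Fin T => P₀) (firstHitAt A C i) = P₀ C * P₀ Aᶜ ^ (i : ℕ) := by
  rw [firstHitAt_eq_pi, Measure.pi_pi]
  simp only [apply_ite P₀, measure_univ, prod_ite, filter_eq', mem_univ, ↓reduceIte, prod_const,
    card_singleton, pow_one, one_pow, mul_one]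
  have hcard : ({j ∈ univ.filter (· ≠ i) | j < i} : Finset (Fin T)) = Iio i := by
    ext j
    simp +contextual [ne_of_lt]
  rw [hcard, Fin.card_Iio]

lemma measure_prod_setOf_firstHit (P₀ : Measure Ω) [IsProbabilityMeasure P₀] {β : Type*}
    [MeasurableSpace β] (ν : Measure β) [SFinite ν] {A B : Set Ω} (hA : MeasurableSet A)
    (hB : MeasurableSet B) {H : Fin T → β → Prop} (hH : ∀ i, MeasurableSet {b | H i b}) :
    ((Measure.pi fun _ : Fin T => P₀).prod ν)
        {ω | ∃ i, ω.1 i ∈ A ∧ (∀ j, ω.1 j ∈ A → i ≤ j) ∧ H i ω.2 ∧ ω.1 i ∈ B}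
      = ∑ i : Fin T, P₀ (A ∩ B) * P₀ Aᶜ ^ (i : ℕ) * ν {b | H i b} := by
  rw [setOf_firstHit_eq_iUnion, measure_iUnion, tsum_fintype]
  · simp only [Measure.prod_prod, measure_pi_firstHitAt]
  · exact fun i j hij =>
      Set.disjoint_prod.mpr (.inl (firstHitAt_disjoint Set.inter_subset_left hij))
  · exact fun i => (measurableSet_firstHitAt hA (hA.inter hB) i).prod (hH i)

end FirstHit

lemma PMF.toMeasure_uniformOfFintype_eval_eq_snd {ι α : Type*} [Fintype ι] [DecidableEq ι]
    [Fintype α] [Nonempty α]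
    [MeasurableSpace ((ι → α) × α)] [DiscreteMeasurableSpace ((ι → α) × α)] (i : ι) :
    (PMF.uniformOfFintype ((ι → α) × α)).toMeasure {hr | hr.1 i = hr.2}
      = (Fintype.card α : ENNReal)⁻¹ := by
  classical
  let e : {hr : (ι → α) × α | hr.1 i = hr.2} ≃ (ι → α) :=
    { toFun := fun hr => hr.1.1
      invFun := fun h => ⟨(h, h i), rfl⟩
      left_inv := fun hr => Subtype.ext (Prod.ext rfl hr.2)
      right_inv := fun _ => rfl }
  rw [PMF.toMeasure_uniformOfFintype_apply _ (DiscreteMeasurableSpace.forall_measurableSet _),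
    Fintype.card_congr e, Fintype.card_prod, Nat.cast_mul, div_eq_mul_inv,
    ENNReal.mul_inv (by simp) (by simp), ← mul_assoc, ENNReal.mul_inv_cancel (by simp) (by simp),
    one_mul]

lemma sum_mul_geom_mem_Icc {p d q q' : ℝ} (T : ℕ) (hp : 0 < p) (hp1 : p ≤ 1)
    (hd : 0 ≤ d) (hlow : q * p ≤ d) (hhigh : d ≤ q' * p) :
    ∑ i ∈ range T, d * (1 - p) ^ i ∈ Set.Icc ((1 - (1 - p) ^ T) * q) q' := by
  set S := ∑ i ∈ range T, (1 - p) ^ i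
  have hpS : p * S = 1 - (1 - p) ^ T := by simpa using mul_neg_geom_sum (1 - p) T
  have hS : 0 ≤ S := sum_nonneg fun i _ => pow_nonneg (by linarith) i
  have hq' : 0 ≤ q' := nonneg_of_mul_nonneg_left (hd.trans hhigh) hp
  rw [← mul_sum]
  constructor
  · calc (1 - (1 - p) ^ T) * q = q * p * S := by rw [← hpS]; ring
      _ ≤ d * S := mul_le_mul_of_nonneg_right hlow hS
  · calc d * S ≤ q' * p * S := mul_le_mul_of_nonneg_right hhigh hS
      _ = q' * (1 - (1 - p) ^ T) := by rw [← hpS]; ring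
      _ ≤ q' := by nlinarith [pow_nonneg (sub_nonneg.mpr hp1) T]

theorem statement_13_general {Ω₀ : Type*} [MeasurableSpace Ω₀] (P₀ : Measure Ω₀)
    [IsProbabilityMeasure P₀]
    (T k : ℕ)
    (A B : Set Ω₀) (hA : MeasurableSet A) (hB : MeasurableSet B)
    (p q q' : ℝ)
    (hp : (P₀ A).toReal = p) (hppos : 0 < p)
    (hlow : q * p ≤ (P₀ (A ∩ B)).toReal) (hhigh : (P₀ (A ∩ B)).toReal ≤ q' * p) :
    (((Measure.pi fun _ : Fin T => P₀).prod
        ((PMF.uniformOfFintype ((Fin T → (Fin k → Bool)) × (Fin k → Bool))).toMeasure))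
      {ω : (Fin T → Ω₀) × ((Fin T → (Fin k → Bool)) × (Fin k → Bool)) |
        ∃ i : Fin T, ω.1 i ∈ A ∧ (∀ j : Fin T, ω.1 j ∈ A → i ≤ j) ∧
          ω.2.1 i = ω.2.2 ∧ ω.1 i ∈ B}).toReal
      ∈ Set.Icc ((1 - (1 - p) ^ T) * q * ((2 : ℝ) ^ k)⁻¹) (q' * ((2 : ℝ) ^ k)⁻¹) := by
  set ν := (PMF.uniformOfFintype ((Fin T → (Fin k → Bool)) × (Fin k → Bool))).toMeasure
  have hhash (i : Fin T) : ν {hr | hr.1 i = hr.2} = ((2 : ENNReal) ^ k)⁻¹ :=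
    (PMF.toMeasure_uniformOfFintype_eval_eq_snd i).trans (by simp)
  have hAc : (P₀ Aᶜ).toReal = 1 - p := by
    rw [← measureReal_def, probReal_compl_eq_one_sub hA, measureReal_def, hp]
  have hp1 : p ≤ 1 := hp ▸ measureReal_le_one
  rw [measure_prod_setOf_firstHit P₀ ν hA hB (H := fun i hr => hr.1 i = hr.2)
    fun _ => DiscreteMeasurableSpace.forall_measurableSet _]
  simp only [hhash]
  rw [← Finset.sum_mul, ENNReal.toReal_mul, ENNReal.toReal_sum fun i _ => by finiteness]
  simp only [ENNReal.toReal_mul, ENNReal.toReal_pow, hAc, ENNReal.toReal_inv, ENNReal.toReal_ofNat]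
  rw [Fin.sum_univ_eq_sum_range (fun i => (P₀ (A ∩ B)).toReal * (1 - p) ^ i)]
  obtain ⟨hlower, hupper⟩ := sum_mul_geom_mem_Icc T hppos hp1 ENNReal.toReal_nonneg hlow hhigh
  have h2k : (0 : ℝ) ≤ (2 ^ k)⁻¹ := by positivity
  exact ⟨mul_le_mul_of_nonneg_right hlower h2k, mul_le_mul_of_nonneg_right hupper h2k⟩

/-- In `T` i.i.d. repetitions (together with an independent uniformly
random hash function `h : {1,…,T} → {0,1}^k` and target `r ∈ {0,1}^k`), the probability of
the event `G` — that some repetition lies in `A`, and the first such repetition `i*`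
satisfies `h(i*) = r` and also lies in `B` — is between `(1-(1-p)^T)·q·2^{-k}` and
`q'·2^{-k}`, where `p = P₀(A) > 0` and `q·p ≤ P₀(A ∩ B) ≤ q'·p`. -/
theorem statement_13 {Ω₀ : Type*} [MeasurableSpace Ω₀] (P₀ : Measure Ω₀)
    [IsProbabilityMeasure P₀]
    (T k : ℕ) (hT : 1 ≤ T)
    (A B : Set Ω₀) (hA : MeasurableSet A) (hB : MeasurableSet B)
    (p q q' : ℝ)
    (hp : (P₀ A).toReal = p) (hppos : 0 < p)
    (hq : q ∈ Set.Icc (0 : ℝ) 1) (hq' : q' ∈ Set.Icc (0 : ℝ) 1)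
    (hlow : q * p ≤ (P₀ (A ∩ B)).toReal) (hhigh : (P₀ (A ∩ B)).toReal ≤ q' * p) :
    (((Measure.pi fun _ : Fin T => P₀).prod
        ((PMF.uniformOfFintype ((Fin T → (Fin k → Bool)) × (Fin k → Bool))).toMeasure))
      {ω : (Fin T → Ω₀) × ((Fin T → (Fin k → Bool)) × (Fin k → Bool)) |
        ∃ i : Fin T, ω.1 i ∈ A ∧ (∀ j : Fin T, ω.1 j ∈ A → i ≤ j) ∧
          ω.2.1 i = ω.2.2 ∧ ω.1 i ∈ B}).toReal
      ∈ Set.Icc ((1 - (1 - p) ^ T) * q * ((2 : ℝ) ^ k)⁻¹) (q' * ((2 : ℝ) ^ k)⁻¹) :=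
  statement_13_general P₀ T k A B hA hB p q q' hp hppos hlow hhigh
end
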